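/- arXiv:2106.12006 — 4 statements merged into one kernel-verified Lean document; each statement's English description precedes it below -/
import Mathlib

section
/- Let m ≥ 1, n ≥ 0 be integers and x, y, ξ, η ∈ ℂ with x ≠ 0, Re(ξ/x) < 1, Im(η − ξy/x) > 0, and i(y + kx) ∉ [0,∞) for every k ∈ ℤ. Then the function η' ↦ J_{m,n}(x,y,ξ,η') is complex-differentiable at η, with derivative ∂_η J_{m,n}(x,y,ξ,η) = −2πi · J_{m−1,n}(x,y,ξ,η). -/
open MeasureTheory Real Filter

/-- The polylogarithm `Li_p(w) = ∑_{j ≥ 1} w^j / j^p`, for integer index `p`. -/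
noncomputable def Li (p : ℤ) (w : ℂ) : ℂ := ∑' j : ℕ, w ^ (j + 1) / ((j : ℂ) + 1) ^ p

/-- The integrand in the definition of `J_{m,n}(x,y,ξ,η)`. -/
noncomputable def Jfun (m n : ℕ) (x y ξ η : ℂ) (s : ℝ) : ℂ :=
  (s : ℂ) ^ n *
      Li m (Complex.exp (-(2 * (π : ℂ)) * (1 - ξ / x) * s +
        2 * (π : ℂ) * Complex.I * (η - ξ * y / x))) /
    Complex.tanh ((π : ℂ) * ((s : ℂ) - Complex.I * y) / x)

/-- The function `J_{m,n}(x,y,ξ,η)`. -/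
noncomputable def J (m n : ℕ) (x y ξ η : ℂ) : ℂ :=
  (-1 : ℂ) ^ (n + m + 1) * ∫ s in Set.Ioi (0 : ℝ), Jfun m n x y ξ η s

/-- The nonnegative real axis `[0,∞)` viewed as a subset of `ℂ`. -/
def nonnegRealAxis : Set ℂ := {z : ℂ | ∃ r : ℝ, 0 ≤ r ∧ z = r}

/-!
Expanding `Li_p(e^z) = ∑_{j ≥ 0} e^{(j+1)z} / (j+1)^p` and differentiating termwise on the
half-plane `Re z < 0` gives `d/dz Li_p(e^z) = Li_{p-1}(e^z)`; the exponent of the polylogarithm in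
the integrand depends on `η` with derivative `2πi`, and the sign `(-1)^{n+m+1}` flips when `m`
drops by one. Differentiation under the integral is justified by a majorant uniform for `η'` near
`η`: `|Li_m(e^z)| ≤ e^{Re z} / (1 - e^{Re z})` supplies the decay `e^{-2π(1 - Re(ξ/x)) s}`, and
`coth(π(s - iy)/x)` is bounded on `s ≥ 0`. Indeed, the ray condition says exactly that `sinh`
does not vanish along this affine ray, so `coth` is continuous on it, and
`|coth w| ≤ 1 + 1/|sinh (Re w)|` controls the tail, because `|Re w|` stays away from `0` for large
`s` (if the ray is vertical, its real part is a nonzero constant, for otherwise it would meet a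
zero `kπi` of `sinh`).
-/

open Topology

lemma Li_exp_eq_tsum (p : ℤ) (z : ℂ) :
    Li p (Complex.exp z) = ∑' j : ℕ, Complex.exp ((j + 1) * z) / ((j : ℂ) + 1) ^ p := by
  simp only [Li, ← Complex.exp_nat_mul, Nat.cast_add, Nat.cast_one]

lemma norm_exp_succ_mul_div_zpow (p : ℤ) (z : ℂ) (j : ℕ) :
    ‖Complex.exp ((j + 1) * z) / ((j : ℂ) + 1) ^ p‖ =
      Real.exp z.re ^ (j + 1 : ℕ) / ((j : ℝ) + 1) ^ p := by
  have hj : ‖(j : ℂ) + 1‖ = (j : ℝ) + 1 := by exact_mod_cast Complex.norm_natCast (j + 1)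
  rw [norm_div, norm_zpow, hj, Complex.norm_exp, ← Real.exp_nat_mul]
  simp

lemma norm_exp_succ_mul_div_zpow_le (p : ℤ) {z : ℂ} {c : ℝ} (hz : z.re ≤ c) (j : ℕ) :
    ‖Complex.exp ((j + 1) * z) / ((j : ℂ) + 1) ^ p‖ ≤
      ((j : ℝ) + 1) ^ p.natAbs * Real.exp c ^ (j + 1) := by
  have hj : (1 : ℝ) ≤ (j : ℝ) + 1 := by simp
  rw [norm_exp_succ_mul_div_zpow, div_eq_inv_mul, ← zpow_neg, ← zpow_natCast]
  exact mul_le_mul (zpow_le_zpow_right₀ hj (show -p ≤ (p.natAbs : ℤ) by lia))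
    (pow_le_pow_left₀ (Real.exp_pos _).le (Real.exp_le_exp.mpr hz) _) (by positivity)
    (by positivity)

lemma summable_succ_pow_mul_exp_pow (N : ℕ) {c : ℝ} (hc : c < 0) :
    Summable fun j : ℕ => ((j : ℝ) + 1) ^ N * Real.exp c ^ (j + 1) := by
  have hq : ‖Real.exp c‖ < 1 := by
    rw [Real.norm_eq_abs, abs_of_pos (Real.exp_pos c)]; exact Real.exp_lt_one_iff.mpr hc
  exact_mod_cast (summable_nat_add_iff (f := fun n : ℕ => (n : ℝ) ^ N * Real.exp c ^ n) 1).mpr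
    (summable_pow_mul_geometric_of_norm_lt_one N hq)

theorem hasDerivAt_Li_exp (p : ℤ) {z : ℂ} (hz : z.re < 0) :
    HasDerivAt (fun w => Li p (Complex.exp w)) (Li (p - 1) (Complex.exp z)) z := by
  simp only [Li_exp_eq_tsum]
  have hopen : IsOpen {w : ℂ | w.re < z.re / 2} :=
    isOpen_lt Complex.continuous_re continuous_const
  have hz' : z ∈ {w : ℂ | w.re < z.re / 2} := by show z.re < z.re / 2; linarith
  refine hasDerivAt_tsum_of_isPreconnected
    (summable_succ_pow_mul_exp_pow (p - 1).natAbs (by linarith : z.re / 2 < 0)) hopen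
    (convex_halfSpace_re_lt _).isPreconnected (fun j w _ => ?_)
    (fun j w hw => norm_exp_succ_mul_div_zpow_le _ (le_of_lt hw) j) hz' ?_ hz'
  · have hj : (j : ℂ) + 1 ≠ 0 := by exact_mod_cast Nat.succ_ne_zero j
    refine (((hasDerivAt_id w).const_mul ((j : ℂ) + 1)).cexp.div_const
      (((j : ℂ) + 1) ^ p)).congr_deriv ?_
    rw [zpow_sub_one₀ hj]
    field_simp
    simp
  · exact Summable.of_norm_bounded (summable_succ_pow_mul_exp_pow p.natAbs hz)
      (norm_exp_succ_mul_div_zpow_le p le_rfl)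

lemma norm_Li_exp_le (p : ℕ) {z : ℂ} {t : ℝ} (hz : z.re ≤ t) (ht : t < 0) :
    ‖Li p (Complex.exp z)‖ ≤ Real.exp z.re / (1 - Real.exp t) := by
  have hq0 := Real.exp_pos z.re
  have hq1 : Real.exp z.re < 1 := Real.exp_lt_one_iff.mpr (hz.trans_lt ht)
  have hgeom : HasSum (fun j : ℕ => Real.exp z.re ^ (j + 1))
      (Real.exp z.re / (1 - Real.exp z.re)) := by
    simpa [pow_succ', div_eq_mul_inv] using
      (hasSum_geometric_of_lt_one hq0.le hq1).mul_left (Real.exp z.re)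
  have hterm (j : ℕ) : ‖Complex.exp ((j + 1) * z) / ((j : ℂ) + 1) ^ (p : ℤ)‖ ≤
      Real.exp z.re ^ (j + 1) := by
    rw [norm_exp_succ_mul_div_zpow, zpow_natCast]
    exact div_le_self (by positivity) (one_le_pow₀ (by simp))
  calc ‖Li p (Complex.exp z)‖ ≤ Real.exp z.re / (1 - Real.exp z.re) := by
        rw [Li_exp_eq_tsum]; exact tsum_of_norm_bounded hgeom hterm
    _ ≤ Real.exp z.re / (1 - Real.exp t) := by
        gcongr
        linarith [Real.exp_lt_one_iff.mpr ht]

lemma abs_sinh_re_le_norm_sinh (z : ℂ) : |Real.sinh z.re| ≤ ‖Complex.sinh z‖ := by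
  have h := abs_norm_sub_norm_le (Complex.exp z) (Complex.exp (-z))
  rw [Complex.norm_exp, Complex.norm_exp, Complex.neg_re, ← Complex.two_sinh, norm_mul,
    Complex.norm_two] at h
  rw [Real.sinh_eq, abs_div, abs_two]
  linarith

lemma norm_cosh_le_cosh_re (z : ℂ) : ‖Complex.cosh z‖ ≤ Real.cosh z.re := by
  have h := norm_add_le (Complex.exp z) (Complex.exp (-z))
  rw [Complex.norm_exp, Complex.norm_exp, Complex.neg_re, ← Complex.two_cosh, norm_mul,
    Complex.norm_two] at h
  rw [Real.cosh_eq]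
  linarith

lemma norm_cosh_div_sinh_le {z : ℂ} (hz : z.re ≠ 0) :
    ‖Complex.cosh z / Complex.sinh z‖ ≤ 1 + 1 / |Real.sinh z.re| := by
  have hs : 0 < |Real.sinh z.re| := abs_pos.mpr (Real.sinh_ne_zero.mpr hz)
  have hc : Real.cosh z.re ≤ |Real.sinh z.re| + 1 := by
    nlinarith [Real.cosh_sq z.re, sq_abs (Real.sinh z.re), Real.cosh_pos z.re]
  rw [norm_div, one_add_div hs.ne']
  exact div_le_div₀ (by positivity) ((norm_cosh_le_cosh_re z).trans hc) hs
    (abs_sinh_re_le_norm_sinh z)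

lemma exists_sinh_affine_eq_zero {w β : ℂ} (hw : w ≠ 0) (hwre : w.re = 0) (hβre : β.re = 0) :
    ∃ s : ℝ, 0 ≤ s ∧ Complex.sinh (w * s + β) = 0 := by
  have hwim : w.im ≠ 0 := fun h => hw (Complex.ext hwre h)
  obtain ⟨k, hk⟩ : ∃ k : ℤ, 0 ≤ (k * π - β.im) / w.im := by
    rcases hwim.lt_or_gt with hneg | hpos
    · refine ⟨⌊β.im / π⌋, div_nonneg_of_nonpos ?_ hneg.le⟩
      have := Int.floor_le (β.im / π)
      rw [le_div_iff₀ Real.pi_pos] at this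
      linarith
    · refine ⟨⌈β.im / π⌉, div_nonneg ?_ hpos.le⟩
      have := Int.le_ceil (β.im / π)
      rw [div_le_iff₀ Real.pi_pos] at this
      linarith
  refine ⟨_, hk, ?_⟩
  have harg : w * ((k * π - β.im) / w.im : ℝ) + β = ((k * π : ℝ) : ℂ) * Complex.I := by
    apply Complex.ext
    · simp [hwre, hβre]
    · simp [hwre]
      field_simp
      ring
  rw [harg, Complex.sinh_mul_I, Complex.ofReal_mul, Complex.ofReal_intCast, Complex.sin_int_mul_pi,
    zero_mul]

lemma exists_pos_le_abs_re_affine {w β : ℂ} (hw : w ≠ 0)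
    (hsinh : ∀ s : ℝ, 0 ≤ s → Complex.sinh (w * s + β) ≠ 0) :
    ∃ c > 0, ∃ S : ℝ, ∀ s ≥ S, c ≤ |(w * s + β).re| := by
  have hre (s : ℝ) : (w * s + β).re = w.re * s + β.re := by simp
  simp only [hre]
  by_cases hwre : w.re = 0
  · have hβre : β.re ≠ 0 := fun hβre =>
      let ⟨s, hs, h⟩ := exists_sinh_affine_eq_zero hw hwre hβre; hsinh s hs h
    exact ⟨|β.re|, abs_pos.mpr hβre, 0, fun s _ => by simp [hwre]⟩
  · refine ⟨1, one_pos, (1 + |β.re|) / |w.re|, fun s hs => ?_⟩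
    rw [ge_iff_le, div_le_iff₀ (abs_pos.mpr hwre)] at hs
    have htri := abs_add_le (w.re * s + β.re) (-β.re)
    rw [add_neg_cancel_right, abs_neg, abs_mul] at htri
    nlinarith [le_abs_self s, abs_nonneg w.re]

theorem exists_norm_cosh_div_sinh_affine_le {w β : ℂ} (hw : w ≠ 0)
    (hsinh : ∀ s : ℝ, 0 ≤ s → Complex.sinh (w * s + β) ≠ 0) :
    ∃ M, ∀ s : ℝ, 0 ≤ s →
      ‖Complex.cosh (w * s + β) / Complex.sinh (w * s + β)‖ ≤ M := by
  obtain ⟨c, hc, S, hS⟩ := exists_pos_le_abs_re_affine hw hsinh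
  have hcont : ContinuousOn
      (fun s : ℝ => Complex.cosh (w * s + β) / Complex.sinh (w * s + β)) (Set.Icc 0 S) :=
    ContinuousOn.div (by fun_prop) (by fun_prop) fun s hs => hsinh s hs.1
  obtain ⟨M, hM⟩ := isCompact_Icc.exists_bound_of_continuousOn hcont
  refine ⟨max M (1 + 1 / Real.sinh c), fun s hs => ?_⟩
  rcases le_total s S with hsS | hSs
  · exact (hM s ⟨hs, hsS⟩).trans (le_max_left _ _)
  · have hcs := hS s hSs
    refine (norm_cosh_div_sinh_le (abs_pos.mp (hc.trans_le hcs))).trans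
      (le_trans ?_ (le_max_right _ _))
    rw [Real.abs_sinh]
    gcongr
    exact Real.sinh_le_sinh.mpr hcs

lemma sinh_pi_mul_sub_div_ne_zero {x y : ℂ} (hx : x ≠ 0)
    (hray : ∀ k : ℤ, Complex.I * (y + (k : ℂ) * x) ∉ nonnegRealAxis) {s : ℝ}
    (hs : 0 ≤ s) : Complex.sinh (π * (s - Complex.I * y) / x) ≠ 0 := by
  intro h
  obtain ⟨k, hk⟩ := Complex.sin_eq_zero_iff.mp
    (by rw [Complex.sin_mul_I, h, zero_mul] :
      Complex.sin (π * (s - Complex.I * y) / x * Complex.I) = 0)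
  have hπ : (π : ℂ) ≠ 0 := Complex.ofReal_ne_zero.mpr Real.pi_ne_zero
  field_simp at hk
  refine hray (-k) ⟨s, hs, ?_⟩
  push_cast
  linear_combination Complex.I * hk + (Complex.I * y - s) * Complex.I_sq

lemma integrableOn_pow_mul_exp_neg_mul (n : ℕ) {a : ℝ} (ha : 0 < a) :
    IntegrableOn (fun s : ℝ => s ^ n * Real.exp (-a * s)) (Set.Ioi 0) := by
  simpa [Real.rpow_natCast] using
    integrableOn_rpow_mul_exp_neg_mul_rpow (s := n) (by linarith [n.cast_nonneg (α := ℝ)])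
      one_pos ha

noncomputable def Jexponent (x y ξ η : ℂ) (s : ℝ) : ℂ :=
  -(2 * (π : ℂ)) * (1 - ξ / x) * s + 2 * (π : ℂ) * Complex.I * (η - ξ * y / x)

noncomputable def Jcoth (x y : ℂ) (s : ℝ) : ℂ :=
  Complex.cosh (π * (s - Complex.I * y) / x) / Complex.sinh (π * (s - Complex.I * y) / x)

-- Dividing by `tanh = sinh / cosh` is multiplying by `cosh / sinh` even where `cosh` vanishes.
lemma Jfun_eq (m n : ℕ) (x y ξ η : ℂ) (s : ℝ) :
    Jfun m n x y ξ η s =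
      (s : ℂ) ^ n * Li m (Complex.exp (Jexponent x y ξ η s)) * Jcoth x y s := by
  rw [Jfun, Jcoth, Jexponent, Complex.tanh_eq_sinh_div_cosh, div_div_eq_mul_div, mul_div_assoc]

lemma re_Jexponent (x y ξ η : ℂ) (s : ℝ) :
    (Jexponent x y ξ η s).re =
      -(2 * π * (1 - (ξ / x).re)) * s - 2 * π * (η - ξ * y / x).im := by
  simp [Jexponent, Complex.mul_re]
  ring

lemma exists_norm_Jcoth_le {x y : ℂ} (hx : x ≠ 0)
    (hray : ∀ k : ℤ, Complex.I * (y + (k : ℂ) * x) ∉ nonnegRealAxis) :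
    ∃ M, ∀ s : ℝ, 0 ≤ s → ‖Jcoth x y s‖ ≤ M := by
  have harg (s : ℝ) :
      π * (s - Complex.I * y) / x = π / x * s + -(π * (Complex.I * y) / x) := by
    ring
  simp only [Jcoth, harg]
  refine exists_norm_cosh_div_sinh_affine_le
    (div_ne_zero (Complex.ofReal_ne_zero.mpr Real.pi_ne_zero) hx) fun s hs => ?_
  rw [← harg]
  exact sinh_pi_mul_sub_div_ne_zero hx hray hs

section Integrand

variable {x y ξ η : ℂ}

lemma re_Jexponent_neg (hξ : (ξ / x).re < 1) (hη : 0 < (η - ξ * y / x).im) {s : ℝ}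
    (hs : 0 ≤ s) : (Jexponent x y ξ η s).re < 0 := by
  rw [re_Jexponent]
  have := mul_nonneg (mul_pos Real.two_pi_pos (sub_pos.mpr hξ)).le hs
  have := mul_pos Real.two_pi_pos hη
  linarith

lemma continuousOn_Jfun (m n : ℕ) (hx : x ≠ 0) (hξ : (ξ / x).re < 1)
    (hη : 0 < (η - ξ * y / x).im)
    (hray : ∀ k : ℤ, Complex.I * (y + (k : ℂ) * x) ∉ nonnegRealAxis) :
    ContinuousOn (Jfun m n x y ξ η) (Set.Ici 0) := by
  rw [show Jfun m n x y ξ η = _ from funext (Jfun_eq m n x y ξ η)]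
  have hE : Continuous (Jexponent x y ξ η) := by unfold Jexponent; fun_prop
  have hLi : ContinuousOn (fun s : ℝ => Li m (Complex.exp (Jexponent x y ξ η s))) (Set.Ici 0) :=
    fun s hs => ((hasDerivAt_Li_exp m (re_Jexponent_neg hξ hη hs)).continuousAt.comp
      hE.continuousAt).continuousWithinAt
  have hcoth : ContinuousOn (Jcoth x y) (Set.Ici 0) :=
    ContinuousOn.div (by fun_prop) (by fun_prop) fun s hs => sinh_pi_mul_sub_div_ne_zero hx hray hs
  exact ((by fun_prop : Continuous fun s : ℝ => (s : ℂ) ^ n).continuousOn.mul hLi).mul hcoth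

lemma norm_Jfun_le (m n : ℕ) (hξ : (ξ / x).re < 1) {δ M : ℝ} (hδ : 0 < δ)
    (hη : δ ≤ (η - ξ * y / x).im) {s : ℝ} (hs : 0 ≤ s) (hM : ‖Jcoth x y s‖ ≤ M) :
    ‖Jfun m n x y ξ η s‖ ≤ M / (1 - Real.exp (-(2 * π * δ))) *
      (s ^ n * Real.exp (-(2 * π * (1 - (ξ / x).re)) * s)) := by
  set a := 2 * π * (1 - (ξ / x).re)
  set q := Real.exp (-(2 * π * δ))
  have hre := re_Jexponent x y ξ η s
  have hdecay : 0 ≤ a * s := mul_nonneg (mul_pos Real.two_pi_pos (sub_pos.mpr hξ)).le hs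
  have hshift : 2 * π * δ ≤ 2 * π * (η - ξ * y / x).im :=
    mul_le_mul_of_nonneg_left hη Real.two_pi_pos.le
  have hδ' : 0 < 2 * π * δ := mul_pos Real.two_pi_pos hδ
  have hLi := norm_Li_exp_le m (z := Jexponent x y ξ η s) (t := -(2 * π * δ)) (by linarith)
    (by linarith)
  have hexp : Real.exp (Jexponent x y ξ η s).re ≤ Real.exp (-a * s) :=
    Real.exp_le_exp.mpr (by linarith)
  have hq : q < 1 := Real.exp_lt_one_iff.mpr (by linarith)
  have hM0 : 0 ≤ M := (norm_nonneg _).trans hM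
  rw [Jfun_eq, norm_mul, norm_mul, norm_pow, Complex.norm_real, Real.norm_of_nonneg hs]
  calc s ^ n * ‖Li m (Complex.exp (Jexponent x y ξ η s))‖ * ‖Jcoth x y s‖
      ≤ s ^ n * (Real.exp (-a * s) / (1 - q)) * M := by
        gcongr
        exact hLi.trans (div_le_div_of_nonneg_right hexp (by linarith))
    _ = M / (1 - q) * (s ^ n * Real.exp (-a * s)) := by ring

lemma hasDerivAt_Jfun_succ (m n : ℕ) (hξ : (ξ / x).re < 1) (hη : 0 < (η - ξ * y / x).im)
    {s : ℝ} (hs : 0 ≤ s) :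
    HasDerivAt (fun η' => Jfun (m + 1) n x y ξ η' s)
      (2 * π * Complex.I * Jfun m n x y ξ η s) η := by
  simp only [Jfun_eq]
  have hE : HasDerivAt (fun η' => Jexponent x y ξ η' s) (2 * π * Complex.I) η := by
    simpa [Jexponent] using (((hasDerivAt_id η).sub_const (ξ * y / x)).const_mul
      (2 * (π : ℂ) * Complex.I)).const_add (-(2 * (π : ℂ)) * (1 - ξ / x) * s)
  have hL := (hasDerivAt_Li_exp ((m + 1 : ℕ) : ℤ) (re_Jexponent_neg hξ hη hs)).comp η hE
  rw [show ((m + 1 : ℕ) : ℤ) - 1 = m by push_cast; ring] at hL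
  exact ((hL.const_mul _).mul_const _).congr_deriv (by ring)

lemma hasDerivAt_integral_Jfun_succ (k n : ℕ) (hx : x ≠ 0) (hξ : (ξ / x).re < 1)
    (hη : 0 < (η - ξ * y / x).im)
    (hray : ∀ k : ℤ, Complex.I * (y + (k : ℂ) * x) ∉ nonnegRealAxis) :
    HasDerivAt (fun η' => ∫ s in Set.Ioi 0, Jfun (k + 1) n x y ξ η' s)
      (2 * π * Complex.I * ∫ s in Set.Ioi 0, Jfun k n x y ξ η s) η := by
  obtain ⟨M, hM⟩ := exists_norm_Jcoth_le hx hray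
  set δ := (η - ξ * y / x).im / 2
  set C := M / (1 - Real.exp (-(2 * π * δ)))
  set a := 2 * π * (1 - (ξ / x).re)
  have hδ : 0 < δ := by positivity
  have ha : 0 < a := mul_pos (by positivity) (by linarith)
  set U := {η' : ℂ | δ < (η' - ξ * y / x).im}
  have hU : U ∈ 𝓝 η := (isOpen_lt continuous_const (by fun_prop)).mem_nhds (half_lt_self hη)
  have hηU : η ∈ U := mem_of_mem_nhds hU
  have hmeas (j : ℕ) {η'} (hη' : η' ∈ U) :
      AEStronglyMeasurable (Jfun j n x y ξ η') (volume.restrict (Set.Ioi 0)) :=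
    ((continuousOn_Jfun j n hx hξ (hδ.trans hη') hray).mono Set.Ioi_subset_Ici_self
      ).aestronglyMeasurable measurableSet_Ioi
  have hbound (j : ℕ) {η'} (hη' : η' ∈ U) {s : ℝ} (hs : s ∈ Set.Ioi 0) :
      ‖Jfun j n x y ξ η' s‖ ≤ C * (s ^ n * Real.exp (-a * s)) :=
    norm_Jfun_le j n hξ hδ hη'.le hs.le (hM s hs.le)
  have hbound' : ∀ᵐ s ∂volume.restrict (Set.Ioi 0), ∀ η' ∈ U,
      ‖2 * π * Complex.I * Jfun k n x y ξ η' s‖ ≤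
        2 * π * (C * (s ^ n * Real.exp (-a * s))) := by
    filter_upwards [ae_restrict_mem measurableSet_Ioi] with s hs η' hη'
    rw [norm_mul, norm_mul, norm_mul, Complex.norm_I, Complex.norm_two, Complex.norm_real,
      Real.norm_of_nonneg Real.pi_pos.le, mul_one]
    exact mul_le_mul_of_nonneg_left (hbound k hη' hs) (by positivity)
  have hdiff : ∀ᵐ s ∂volume.restrict (Set.Ioi 0), ∀ η' ∈ U,
      HasDerivAt (Jfun (k + 1) n x y ξ · s) (2 * π * Complex.I * Jfun k n x y ξ η' s) η' := by
    filter_upwards [ae_restrict_mem measurableSet_Ioi] with s hs η' hη'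
    exact hasDerivAt_Jfun_succ k n hξ (hδ.trans hη') hs.le
  have hmajorant := (integrableOn_pow_mul_exp_neg_mul n ha).const_mul C
  have hderiv := (hasDerivAt_integral_of_dominated_loc_of_deriv_le hU
    (eventually_of_mem hU fun η' hη' => hmeas (k + 1) hη')
    (hmajorant.mono' (hmeas (k + 1) hηU) (ae_restrict_of_forall_mem measurableSet_Ioi
      fun s hs => hbound (k + 1) hηU hs))
    ((hmeas k hηU).const_mul _) hbound' (hmajorant.const_mul _) hdiff).2
  rwa [integral_const_mul] at hderiv

end Integrand

theorem stmt2 (m n : ℕ) (hm : 1 ≤ m) (x y ξ η : ℂ) (hx : x ≠ 0)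
    (hξ : (ξ / x).re < 1) (hη : 0 < (η - ξ * y / x).im)
    (hray : ∀ k : ℤ, Complex.I * (y + (k : ℂ) * x) ∉ nonnegRealAxis) :
    HasDerivAt (fun η' : ℂ => J m n x y ξ η')
      (-(2 * (π : ℂ) * Complex.I) * J (m - 1) n x y ξ η) η := by
  obtain ⟨k, rfl⟩ : ∃ k, m = k + 1 := ⟨m - 1, by lia⟩
  rw [Nat.add_sub_cancel]
  refine ((hasDerivAt_integral_Jfun_succ k n hx hξ hη hray).const_mul
    ((-1 : ℂ) ^ (n + (k + 1) + 1))).congr_deriv ?_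
  rw [J]
  ring
end

section
/- Let a, x, y ∈ ℂ with a ≠ 0 and Re(a t x − y) > 0 for every t ∈ [0,1]. Then x · ∫_0^1 (t x − x) / (1 − e^{a t x − y}) dt = −(x/a) · log(1 − e^y) + (1/a²) · ( Li₂(e^{y − a x}) − Li₂(e^y) ), where log is the principal branch (note Re(1 − e^y) > 0 since |e^y| < 1 by the hypothesis at t = 0, and |e^{y − ax}| < 1 by the hypothesis at t = 1). -/
open MeasureTheory Real Filter

/-- The dilogarithm `Li₂(w) = ∑_{j ≥ 1} w^j / j²`. -/
noncomputable def Li2 (w : ℂ) : ℂ := ∑' j : ℕ, w ^ (j + 1) / ((j : ℂ) + 1) ^ 2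

/-! With `w = e^{y - a t x}` the hypothesis gives `‖w‖ ≤ r < 1` uniformly on `[0,1]`, and the
integrand is `(x - t x) ∑_{j ≥ 1} w^j`. Dominated convergence lets us integrate termwise; with
`n = j + 1`, the term `∫₀¹ (1 - t) e^{n (y - a x t)} dt` is elementary, and its pieces carrying
`1/n²` and `1/n` sum to the two dilogarithms and to `-log (1 - e^y)`. -/

open Complex Set intervalIntegral
open scoped Interval

lemma hasSum_Li2 {z : ℂ} (hz : ‖z‖ < 1) :
    HasSum (fun j : ℕ => z ^ (j + 1) / ((j : ℂ) + 1) ^ 2) (Li2 z) := by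
  refine (Summable.of_norm_bounded ((summable_geometric_of_lt_one (norm_nonneg z) hz).mul_left ‖z‖)
    fun j => ?_).hasSum
  have hj : (1 : ℝ) ≤ ‖(j : ℂ) + 1‖ ^ 2 := one_le_pow₀ <| by norm_cast; simp
  calc ‖z ^ (j + 1) / ((j : ℂ) + 1) ^ 2‖ ≤ ‖z ^ (j + 1)‖ := by
        rw [norm_div, norm_pow ((j : ℂ) + 1)]
        exact div_le_self (norm_nonneg _) hj
    _ = ‖z‖ * ‖z‖ ^ j := by rw [norm_pow, pow_succ']

lemma hasSum_neg_mul_cexp_neg_pow {v : ℂ} (hv : 0 < v.re) (u : ℂ) :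
    HasSum (fun j : ℕ => -u * cexp (-v) ^ (j + 1)) (u / (1 - cexp v)) := by
  have hw : ‖cexp (-v)‖ < 1 := by simpa [norm_exp] using hv
  have key : u / (1 - cexp v) = -u * cexp (-v) * (1 - cexp (-v))⁻¹ := by
    rw [← inv_inv (cexp v), ← Complex.exp_neg,
      show 1 - (cexp (-v))⁻¹ = -(1 - cexp (-v)) / cexp (-v) by field_simp; ring,
      div_div_eq_mul_div, div_neg, div_eq_mul_inv]
    ring
  simpa only [key, pow_succ', mul_assoc] using
    (hasSum_geometric_of_norm_lt_one hw).mul_left (-u * cexp (-v))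

lemma sq_mul_integral_one_sub_mul_cexp (c d : ℂ) :
    c ^ 2 * ∫ t in (0 : ℝ)..1, (1 - (t : ℂ)) * cexp (d - c * t) =
      cexp (d - c) - cexp d + c * cexp d := by
  have hderiv : ∀ t : ℝ, HasDerivAt (fun s : ℝ => cexp (d - c * s) * (1 - c + c * s))
      (c ^ 2 * ((1 - (t : ℂ)) * cexp (d - c * t))) t := by
    intro t
    have hs : HasDerivAt (fun s : ℝ => (s : ℂ)) 1 t := hasDerivAt_id t |>.ofReal_comp
    refine (((hs.const_mul c).const_sub d).cexp.mul
      ((hs.const_mul c).const_add (1 - c))).congr_deriv ?_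
    ring
  rw [← intervalIntegral.integral_const_mul,
    integral_eq_sub_of_hasDerivAt (fun t _ => hderiv t)
      (Continuous.intervalIntegrable (by fun_prop) _ _)]
  simp
  ring

lemma mul_integral_sub_mul_cexp_pow (a x y : ℂ) (ha : a ≠ 0) (j : ℕ) :
    x * ∫ t in (0 : ℝ)..1, (x - t * x) * cexp (y - a * t * x) ^ (j + 1) =
      (cexp (y - a * x) ^ (j + 1) / ((j : ℂ) + 1) ^ 2 - cexp y ^ (j + 1) / ((j : ℂ) + 1) ^ 2) /
          a ^ 2 + x / a * (cexp y ^ (j + 1) / ((j : ℂ) + 1)) := by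
  set n : ℂ := (j : ℂ) + 1
  have hn : n ≠ 0 := Nat.cast_add_one_ne_zero j
  have hpow : ∀ z : ℂ, cexp z ^ (j + 1) = cexp (n * z) := fun z => by
    rw [← Complex.exp_nat_mul]; push_cast; rfl
  have hint := sq_mul_integral_one_sub_mul_cexp (n * a * x) (n * y)
  have hI : ∫ t in (0 : ℝ)..1, (x - t * x) * cexp (y - a * t * x) ^ (j + 1) =
      x * ∫ t in (0 : ℝ)..1, (1 - (t : ℂ)) * cexp (n * y - n * a * x * t) := by
    rw [← intervalIntegral.integral_const_mul]
    congr 1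
    funext t
    rw [hpow]
    ring_nf
  rw [hI, hpow, hpow, show n * (y - a * x) = n * y - n * a * x by ring]
  -- `field_simp` would normalize the exponent of `E₁` in the goal but not in `hint`
  generalize (∫ t in (0 : ℝ)..1, (1 - (t : ℂ)) * cexp (n * y - n * a * x * t)) = I at hint ⊢
  generalize cexp (n * y - n * a * x) = E₁ at hint ⊢
  field_simp
  linear_combination hint

lemma hasSum_integral_mul_cexp_pow {a x y : ℂ}
    (h : ∀ t : ℝ, t ∈ Icc (0 : ℝ) 1 → 0 < (a * t * x - y).re) :
    HasSum (fun j : ℕ => ∫ t in (0 : ℝ)..1, (x - t * x) * cexp (y - a * t * x) ^ (j + 1))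
      (∫ t in (0 : ℝ)..1, ((t : ℂ) * x - x) / (1 - cexp (a * t * x - y))) := by
  obtain ⟨δ, hδ, hδle⟩ := isCompact_Icc.exists_forall_le'
    (by fun_prop : Continuous fun t : ℝ => (a * t * x - y).re).continuousOn h
  set r := rexp (-δ)
  have hr : r < 1 := Real.exp_lt_one_iff.2 (neg_lt_zero.2 hδ)
  have hnorm : ∀ t ∈ Ι (0 : ℝ) 1, ‖x - t * x‖ ≤ ‖x‖ ∧ ‖cexp (y - a * t * x)‖ ≤ r := by
    intro t ht
    rw [uIoc_of_le zero_le_one] at ht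
    refine ⟨?_, ?_⟩
    · rw [show x - t * x = ((1 - t : ℝ) : ℂ) * x by push_cast; ring, norm_mul, norm_real,
        Real.norm_of_nonneg (by linarith [ht.2])]
      exact mul_le_of_le_one_left (norm_nonneg x) (by linarith [ht.1])
    · rw [norm_exp, ← neg_sub, neg_re]
      exact Real.exp_le_exp.2 (neg_le_neg (hδle t (Ioc_subset_Icc_self ht)))
  refine hasSum_integral_of_dominated_convergence (fun j _ => ‖x‖ * r ^ (j + 1))
    (fun j => (by fun_prop : Continuous _).aestronglyMeasurable) (fun j => .of_forall ?_)
    (.of_forall fun _ _ => ((summable_nat_add_iff 1).2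
      (summable_geometric_of_lt_one (Real.exp_pos _).le hr)).mul_left _)
    intervalIntegrable_const (.of_forall ?_)
  · intro t ht
    rw [norm_mul, norm_pow]
    exact mul_le_mul (hnorm t ht).1 (pow_le_pow_left₀ (norm_nonneg _) (hnorm t ht).2 _)
      (by positivity) (norm_nonneg x)
  · intro t ht
    have hpos := h t (Ioc_subset_Icc_self (by rwa [uIoc_of_le zero_le_one] at ht))
    simpa only [neg_sub] using hasSum_neg_mul_cexp_neg_pow hpos ((t : ℂ) * x - x)

theorem stmt14 (a x y : ℂ) (ha : a ≠ 0)
    (h : ∀ t : ℝ, t ∈ Set.Icc (0 : ℝ) 1 → 0 < (a * t * x - y).re) :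
    (x * ∫ t in (0 : ℝ)..1, ((t : ℂ) * x - x) / (1 - Complex.exp (a * t * x - y))) =
      -(x / a) * Complex.log (1 - Complex.exp y) +
        (1 / a ^ 2) * (Li2 (Complex.exp (y - a * x)) - Li2 (Complex.exp y)) := by
  have hw₀ : ‖cexp y‖ < 1 := by simpa [norm_exp] using h 0 (by simp)
  have hw₁ : ‖cexp (y - a * x)‖ < 1 := by simpa [norm_exp] using h 1 (by simp)
  have hlhs := (hasSum_integral_mul_cexp_pow h).mul_left x
  simp_rw [mul_integral_sub_mul_cexp_pow a x y ha] at hlhs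
  rw [hlhs.unique ((((hasSum_Li2 hw₁).sub (hasSum_Li2 hw₀)).div_const _).add
    ((hasSum_taylorSeries_neg_log' hw₀).mul_left _))]
  ring
end

section
/- Let θ > 0 be real and z ∈ ℂ with Re z < 0 and |Im z| < π. Then ∫_{−∞}^∞ log(1 + e^{θξ}) / (1 + e^{ξ − z}) dξ = −θ · Li₂(−e^z) + ∫_0^∞ log(1 + e^{−θξ}) · ( 1/(1 + e^{ξ − z}) + 1/(1 + e^{−ξ − z}) ) dξ, where both integrals converge absolutely and Li₂(−e^z) = ∑_{j=1}^∞ (−e^z)^j / j² (the series converges since |e^z| < 1). -/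
/-!
Split the line at `0` and reflect the negative half-line; this produces the second kernel
`1 / (1 + e^{-ξ-z})`. On the positive half-line, `log (1 + e^{θξ}) = θξ + log (1 + e^{-θξ})`;
the linear part contributes `θ ∫₀^∞ ξ / (1 + e^{ξ-z}) dξ`, and expanding
`1 / (1 + e^{ξ-z}) = -∑_{j ≥ 1} (-e^z)^j e^{-jξ}` termwise, with
`∫₀^∞ ξ e^{-jξ} dξ = 1 / j²`, identifies this integral with `-Li₂(-e^z)`. All integrals
converge because `|1 + e^w| ≥ (1 + cos (Im w)) / 2 · max 1 (e^{Re w})`, a bound that is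
uniform on every line `Im w = y` with `|y| < π`.
-/

open MeasureTheory Real Filter

open Set

lemma norm_one_add_exp_sq (w : ℂ) :
    ‖1 + Complex.exp w‖ ^ 2 = 1 + 2 * rexp w.re * cos w.im + rexp w.re ^ 2 := by
  rw [Complex.sq_norm, Complex.normSq_apply]
  simp only [Complex.add_re, Complex.add_im, Complex.one_re, Complex.one_im, Complex.exp_re,
    Complex.exp_im]
  linear_combination rexp w.re ^ 2 * sin_sq_add_cos_sq w.im

lemma one_add_cos_pos {y : ℝ} (hy : |y| < π) : 0 < 1 + cos y := by
  have := cos_lt_cos_of_nonneg_of_le_pi (abs_nonneg y) le_rfl hy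
  rw [cos_abs, cos_pi] at this
  linarith

lemma one_add_cos_mul_max_le_norm_one_add_exp (w : ℂ) :
    (1 + cos w.im) / 2 * max 1 (rexp w.re) ≤ ‖1 + Complex.exp w‖ := by
  have hsq := norm_one_add_exp_sq w
  set r := rexp w.re
  set c := cos w.im
  have hr : 0 < r := exp_pos _
  have hc : -1 ≤ c := neg_one_le_cos _
  have hc' : c ≤ 1 := cos_le_one _
  -- `1 + 2rc + r² = (1 + c)(1 + r²)/2 + (1 - c)(1 - r)²/2 + r(1 + c)`
  have hlow : (1 + c) / 2 * (1 + r ^ 2) ≤ ‖1 + Complex.exp w‖ ^ 2 := by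
    rw [hsq]
    nlinarith [mul_nonneg (by linarith : 0 ≤ 1 - c) (sq_nonneg (1 - r)),
      mul_nonneg hr.le (by linarith : 0 ≤ 1 + c)]
  have hmax : max 1 r ^ 2 ≤ 1 + r ^ 2 := by
    rcases max_cases 1 r with ⟨h, -⟩ | ⟨h, -⟩ <;> rw [h] <;> nlinarith
  have hlhs : 0 ≤ (1 + c) / 2 * max 1 r :=
    mul_nonneg (by linarith) (hr.le.trans (le_max_right 1 r))
  refine (pow_le_pow_iff_left₀ hlhs (norm_nonneg _) two_ne_zero).mp ?_
  calc ((1 + c) / 2 * max 1 r) ^ 2 ≤ (1 + c) / 2 * max 1 r ^ 2 := by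
        rw [mul_pow]; gcongr; nlinarith
    _ ≤ (1 + c) / 2 * (1 + r ^ 2) := by gcongr; linarith
    _ ≤ _ := hlow

lemma one_add_exp_ne_zero {w : ℂ} (hw : |w.im| < π) : 1 + Complex.exp w ≠ 0 := by
  rw [← norm_pos_iff]
  exact (mul_pos (by linarith [one_add_cos_pos hw]) (lt_max_of_lt_left one_pos)).trans_le
    (one_add_cos_mul_max_le_norm_one_add_exp w)

lemma norm_inv_one_add_exp_le_div_max {w : ℂ} (hw : |w.im| < π) :
    ‖(1 + Complex.exp w)⁻¹‖ ≤ 2 / (1 + cos w.im) / max 1 (rexp w.re) := by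
  have hc := one_add_cos_pos hw
  rw [norm_inv, div_div, ← inv_div]
  refine inv_anti₀ (by positivity) ?_
  calc (1 + cos w.im) * max 1 (rexp w.re) / 2 = (1 + cos w.im) / 2 * max 1 (rexp w.re) := by
        ring
    _ ≤ _ := one_add_cos_mul_max_le_norm_one_add_exp w

lemma norm_inv_one_add_exp_le {w : ℂ} (hw : |w.im| < π) :
    ‖(1 + Complex.exp w)⁻¹‖ ≤ 2 / (1 + cos w.im) :=
  (norm_inv_one_add_exp_le_div_max hw).trans <|
    div_le_self (div_nonneg zero_le_two (one_add_cos_pos hw).le) (le_max_left _ _)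

lemma norm_inv_one_add_exp_le_mul_exp {w : ℂ} (hw : |w.im| < π) :
    ‖(1 + Complex.exp w)⁻¹‖ ≤ 2 / (1 + cos w.im) * rexp (-w.re) := by
  refine (norm_inv_one_add_exp_le_div_max hw).trans ?_
  rw [exp_neg, ← div_eq_mul_inv]
  exact div_le_div_of_nonneg_left (div_nonneg zero_le_two (one_add_cos_pos hw).le)
    (exp_pos _) (le_max_right _ _)

lemma integrableOn_mul_exp_neg_mul {a : ℝ} (ha : 0 < a) :
    IntegrableOn (fun x : ℝ => x * rexp (-(a * x))) (Ioi 0) := by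
  simpa [rpow_one, neg_mul] using
    integrableOn_rpow_mul_exp_neg_mul_rpow (s := 1) (p := 1) (by norm_num) one_pos ha

lemma integral_mul_exp_neg_mul {a : ℝ} (ha : 0 < a) :
    ∫ x in Ioi (0 : ℝ), x * rexp (-(a * x)) = 1 / a ^ 2 := by
  have := integral_rpow_mul_exp_neg_mul_Ioi two_pos ha
  norm_num [Gamma_two] at this
  rwa [one_div]

lemma hasSum_mul_geometric_exp_neg {w : ℂ} (hw : ‖w‖ ≤ 1) {x : ℝ} (hx : 0 < x) :
    HasSum (fun j : ℕ => w ^ (j + 1) * ((x * rexp (-((j + 1) * x)) : ℝ) : ℂ))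
      (x * (w * rexp (-x) / (1 - w * rexp (-x)))) := by
  set q : ℂ := w * rexp (-x)
  have hq : ‖q‖ < 1 := by
    rw [norm_mul, Complex.norm_real, norm_of_nonneg (exp_pos _).le]
    exact mul_lt_one_of_nonneg_of_lt_one_right hw (exp_pos _).le
      (exp_lt_one_iff.mpr (by linarith))
  have hterm : ∀ j : ℕ,
      w ^ (j + 1) * ((x * rexp (-((j + 1) * x)) : ℝ) : ℂ) = x * (q * q ^ j) := fun j => by
    rw [← pow_succ', mul_pow, ← Complex.ofReal_pow, ← exp_nat_mul]
    push_cast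
    ring_nf
  simpa only [hterm, div_eq_mul_inv] using
    ((hasSum_geometric_of_norm_lt_one hq).mul_left q).mul_left (x : ℂ)

lemma Li2_eq_integral {w : ℂ} (hw : ‖w‖ ≤ 1) :
    Li2 w = ∫ x in Ioi (0 : ℝ), x * (w * rexp (-x) / (1 - w * rexp (-x))) := by
  set F : ℕ → ℝ → ℂ := fun j x => w ^ (j + 1) * ((x * rexp (-((j + 1) * x)) : ℝ) : ℂ)
  have hF_int : ∀ j, IntegrableOn (F j) (Ioi 0) := fun j =>
    ((integrableOn_mul_exp_neg_mul j.cast_add_one_pos).ofReal).const_mul _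
  have hF_integral : ∀ j : ℕ,
      ∫ x in Ioi (0 : ℝ), F j x = w ^ (j + 1) / ((j : ℂ) + 1) ^ 2 := by
    intro j
    rw [integral_const_mul, integral_complex_ofReal, integral_mul_exp_neg_mul j.cast_add_one_pos]
    push_cast
    ring
  have hF_norm : ∀ j : ℕ,
      ∫ x in Ioi (0 : ℝ), ‖F j x‖ = ‖w‖ ^ (j + 1) * (1 / ((j : ℝ) + 1) ^ 2) := by
    intro j
    rw [← integral_mul_exp_neg_mul j.cast_add_one_pos, ← integral_const_mul]
    refine setIntegral_congr_fun measurableSet_Ioi fun x hx => ?_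
    rw [norm_mul, norm_pow, Complex.norm_real, norm_of_nonneg (by positivity [hx.out.le])]
  have hF_sum : Summable fun j => ∫ x in Ioi (0 : ℝ), ‖F j x‖ := by
    simp only [hF_norm]
    refine Summable.of_nonneg_of_le (fun j => by positivity) (fun j => ?_)
      ((summable_nat_add_iff 1).mpr (summable_one_div_nat_pow.mpr one_lt_two))
    push_cast
    exact mul_le_of_le_one_left (by positivity) (pow_le_one₀ (norm_nonneg w) hw)
  rw [setIntegral_congr_fun measurableSet_Ioi fun x hx =>
    (hasSum_mul_geometric_exp_neg hw hx).tsum_eq.symm,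
    ← integral_tsum_of_summable_integral_norm hF_int hF_sum]
  exact tsum_congr fun j => (hF_integral j).symm

lemma integral_Ioi_div_one_add_exp_sub {z : ℂ} (hz : z.re ≤ 0) :
    ∫ ξ in Ioi (0 : ℝ), (ξ : ℂ) / (1 + Complex.exp (ξ - z)) = -Li2 (-Complex.exp z) := by
  have hw : ‖-Complex.exp z‖ ≤ 1 := by
    rw [norm_neg, Complex.norm_exp, exp_le_one_iff]; exact hz
  rw [Li2_eq_integral hw, ← integral_neg]
  refine setIntegral_congr_fun measurableSet_Ioi fun ξ _ => ?_
  set a := Complex.exp (ξ - z)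
  have ha : a ≠ 0 := Complex.exp_ne_zero _
  have hinv : Complex.exp z * (rexp (-ξ) : ℂ) = a⁻¹ := by
    rw [Complex.ofReal_exp, ← Complex.exp_add, ← Complex.exp_neg]; push_cast; ring_nf
  have hfrac : a⁻¹ / (1 + a⁻¹) = (1 + a)⁻¹ := by
    rw [show 1 + a⁻¹ = a⁻¹ * (1 + a) by rw [mul_add, mul_one, inv_mul_cancel₀ ha, add_comm],
      div_mul_cancel_left₀ (inv_ne_zero ha)]
  rw [neg_mul, hinv, sub_neg_eq_add, neg_div, mul_neg, neg_neg, hfrac, div_eq_mul_inv]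

lemma log_one_add_exp_eq_add_log_one_add_exp_neg (t : ℝ) :
    log (1 + rexp t) = t + log (1 + rexp (-t)) := by
  have : 1 + rexp t = rexp t * (1 + rexp (-t)) := by
    rw [mul_add, mul_one, ← exp_add, add_neg_cancel, exp_zero, add_comm]
  rw [this, log_mul (exp_pos t).ne' (by positivity), log_exp]

lemma log_one_add_exp_le_exp (t : ℝ) : log (1 + rexp t) ≤ rexp t := by
  linarith [log_le_sub_one_of_pos (x := 1 + rexp t) (by positivity)]

lemma integrableOn_log_one_add_exp_neg_mul {θ : ℝ} (hθ : 0 < θ) (a : ℝ) :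
    IntegrableOn (fun ξ => log (1 + rexp (-θ * ξ))) (Ioi a) := by
  refine (exp_neg_integrableOn_Ioi a hθ).mono' (by fun_prop : Measurable _).aestronglyMeasurable
    (ae_of_all _ fun ξ => ?_)
  rw [norm_of_nonneg (log_nonneg (by linarith [exp_pos (-θ * ξ)]))]
  exact log_one_add_exp_le_exp _

lemma continuous_inv_one_add_exp {w : ℝ → ℂ} (hw : Continuous w)
    (him : ∀ ξ, |(w ξ).im| < π) : Continuous fun ξ => (1 + Complex.exp (w ξ))⁻¹ :=
  (continuous_const.add (Complex.continuous_exp.comp hw)).inv₀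
    fun ξ => one_add_exp_ne_zero (him ξ)

lemma integrableOn_log_one_add_exp_neg_mul_div {θ : ℝ} (hθ : 0 < θ) (a : ℝ) {w : ℝ → ℂ}
    (hw : Continuous w) {y : ℝ} (hy : |y| < π) (him : ∀ ξ, (w ξ).im = y) :
    IntegrableOn (fun ξ => (log (1 + rexp (-θ * ξ)) : ℂ) / (1 + Complex.exp (w ξ)))
      (Ioi a) := by
  simp_rw [div_eq_mul_inv]
  have him' : ∀ ξ, |(w ξ).im| < π := fun ξ => by rw [him ξ]; exact hy
  refine (integrableOn_log_one_add_exp_neg_mul hθ a).ofReal.mul_bdd (c := 2 / (1 + cos y))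
    (continuous_inv_one_add_exp hw him').aestronglyMeasurable (ae_of_all _ fun ξ => ?_)
  simpa only [him ξ] using norm_inv_one_add_exp_le (him' ξ)

lemma integrableOn_Ioi_div_one_add_exp_sub {z : ℂ} (hre : z.re ≤ 0) (him : |z.im| < π) :
    IntegrableOn (fun ξ : ℝ => (ξ : ℂ) / (1 + Complex.exp (ξ - z))) (Ioi 0) := by
  have him' : ∀ ξ : ℝ, |((ξ : ℂ) - z).im| < π := fun ξ => by simpa using him
  have hmeas := Complex.continuous_ofReal.mul (continuous_inv_one_add_exp (by fun_prop) him')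
  refine ((integrableOn_mul_exp_neg_mul one_pos).const_mul (2 / (1 + cos z.im))).mono'
    hmeas.aestronglyMeasurable
    ((ae_restrict_mem measurableSet_Ioi).mono fun ξ (hξ : 0 < ξ) => ?_)
  have hbound := norm_inv_one_add_exp_le_mul_exp (him' ξ)
  simp only [Complex.sub_im, Complex.ofReal_im, zero_sub, cos_neg, Complex.sub_re,
    Complex.ofReal_re] at hbound
  rw [div_eq_mul_inv, norm_mul, Complex.norm_real, norm_of_nonneg hξ.le, one_mul]
  calc ξ * ‖(1 + Complex.exp (ξ - z))⁻¹‖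
      ≤ ξ * (2 / (1 + cos z.im) * rexp (-(ξ - z.re))) := by gcongr
    _ ≤ ξ * (2 / (1 + cos z.im) * rexp (-ξ)) := by
        gcongr
        · exact div_nonneg zero_le_two (one_add_cos_pos him).le
        · linarith
    _ = _ := by ring

section Reflection

variable {E : Type*} [NormedAddCommGroup E] {f : ℝ → E}

lemma integrable_of_integrableOn_Ioi_of_comp_neg (hpos : IntegrableOn f (Ioi 0))
    (hneg : IntegrableOn (fun x => f (-x)) (Ioi 0)) : Integrable f := by
  have hIic : IntegrableOn f (Iic 0) := by
    have hIci : IntegrableOn (f ∘ Neg.neg) (Neg.neg ⁻¹' Iic 0) := by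
      rw [neg_preimage, neg_Iic, neg_zero]
      exact (integrableOn_Ici_iff_integrableOn_Ioi (hb := enorm_ne_top)).mpr hneg
    exact ((Measure.measurePreserving_neg volume).integrableOn_comp_preimage
      (Homeomorph.neg ℝ).measurableEmbedding).mp hIci
  rw [← integrableOn_univ, ← Iic_union_Ioi (a := (0 : ℝ))]
  exact hIic.union hpos

lemma integral_eq_integral_Ioi_comp_neg_add [NormedSpace ℝ E] (hf : Integrable f) :
    ∫ x, f x = (∫ x in Ioi 0, f (-x)) + ∫ x in Ioi 0, f x := by
  rw [integral_comp_neg_Ioi, neg_zero,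
    intervalIntegral.integral_Iic_add_Ioi hf.integrableOn hf.integrableOn]

end Reflection

theorem stmt15 (θ : ℝ) (hθ : 0 < θ) (z : ℂ) (hre : z.re < 0) (him : |z.im| < π) :
    Integrable (fun ξ : ℝ =>
      (Real.log (1 + Real.exp (θ * ξ)) : ℂ) / (1 + Complex.exp ((ξ : ℂ) - z))) ∧
    IntegrableOn (fun ξ : ℝ =>
      (Real.log (1 + Real.exp (-θ * ξ)) : ℂ) *
        (1 / (1 + Complex.exp ((ξ : ℂ) - z)) + 1 / (1 + Complex.exp (-(ξ : ℂ) - z))))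
      (Set.Ioi 0) ∧
    (∫ ξ : ℝ, (Real.log (1 + Real.exp (θ * ξ)) : ℂ) / (1 + Complex.exp ((ξ : ℂ) - z))) =
      -(θ : ℂ) * Li2 (-Complex.exp z) +
        ∫ ξ in Set.Ioi (0 : ℝ), (Real.log (1 + Real.exp (-θ * ξ)) : ℂ) *
          (1 / (1 + Complex.exp ((ξ : ℂ) - z)) + 1 / (1 + Complex.exp (-(ξ : ℂ) - z))) := by
  set F := fun ξ : ℝ => (log (1 + rexp (θ * ξ)) : ℂ) / (1 + Complex.exp (ξ - z))
  set G := fun ξ : ℝ => (log (1 + rexp (-θ * ξ)) : ℂ) / (1 + Complex.exp (ξ - z))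
  set H := fun ξ : ℝ => (log (1 + rexp (-θ * ξ)) : ℂ) / (1 + Complex.exp (-ξ - z))
  have hG : IntegrableOn G (Ioi 0) :=
    integrableOn_log_one_add_exp_neg_mul_div hθ 0 (by fun_prop) (y := -z.im) (by rwa [abs_neg])
      fun ξ => by simp
  have hH : IntegrableOn H (Ioi 0) :=
    integrableOn_log_one_add_exp_neg_mul_div hθ 0 (by fun_prop) (y := -z.im) (by rwa [abs_neg])
      fun ξ => by simp
  have hlin := integrableOn_Ioi_div_one_add_exp_sub hre.le him
  have hF_neg : (fun ξ => F (-ξ)) = H := by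
    ext ξ; simp only [F, H, mul_neg, neg_mul, Complex.ofReal_neg]
  have hF_pos : EqOn F (fun ξ => θ * (ξ / (1 + Complex.exp (ξ - z))) + G ξ) (Ioi 0) := by
    intro ξ _
    simp only [F, G, log_one_add_exp_eq_add_log_one_add_exp_neg (θ * ξ), neg_mul]
    push_cast
    ring
  have hF : Integrable F := integrable_of_integrableOn_Ioi_of_comp_neg
    (IntegrableOn.congr_fun ((hlin.const_mul _).add hG) hF_pos.symm measurableSet_Ioi)
    (hF_neg ▸ hH)
  have hsum : (fun ξ : ℝ => (log (1 + rexp (-θ * ξ)) : ℂ) *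
      (1 / (1 + Complex.exp (ξ - z)) + 1 / (1 + Complex.exp (-ξ - z)))) = G + H := by
    ext ξ; simp only [G, H, Pi.add_apply, mul_add, mul_one_div]
  refine ⟨hF, hsum ▸ hG.add hH, ?_⟩
  rw [integral_eq_integral_Ioi_comp_neg_add hF, hF_neg,
    setIntegral_congr_fun measurableSet_Ioi hF_pos, integral_add (hlin.const_mul _) hG,
    integral_const_mul, integral_Ioi_div_one_add_exp_sub hre.le, hsum, integral_add' hG hH]
  ring
end

section
/- Let v, w ∈ ℂ with w ≠ 0 and 0 < Re(v/w) < 1, and let x, x' be real numbers in (0,1). Set a := v/w. Then ∑_{k=0}^∞ x^k/(v + k w) + ∑_{k=1}^∞ x'^k/(v − k w) = (x^{−a}/w) · [ ∫_0^x y^{a−1}/(1 − y) dy + (x x')^{a} · ∫_{1/x'}^∞ y^{a−1}/(1 − y) dy ], where both series converge absolutely, both integrals converge absolutely (the first since Re a > 0, the second since Re a < 1 and 1/x' > 1), and complex powers of positive real numbers are taken with the principal branch (y^{a−1} := e^{(a−1)·log y} for y > 0). -/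
/-!
Expand `1 / (1 - y)` geometrically: as `∑ y ^ k` on `(0, x]` and as `-∑ y⁻¹ ^ (k + 1)` on
`(1 / x', ∞)`. There `‖y‖ ≤ x < 1`, resp. `‖y⁻¹‖ ≤ x' < 1`, so the `k`-th term of the expanded
integrand is bounded by a fixed integrable function times `x ^ k`, resp. `x' ^ k`, and the
integrals may be taken termwise:
`∫₀ˣ y ^ (a - 1) / (1 - y) dy = ∑ x ^ (a + k) / (a + k)` and
`∫_{1/x'}^∞ y ^ (a - 1) / (1 - y) dy = ∑ (1 / x') ^ (a - 1 - k) / (a - 1 - k)`.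
Multiplied by `x ^ (-a) / w`, resp. `x ^ (-a) (x x') ^ a / w`, these are the two series term by
term, since `v + k w = (a + k) w`.
-/

open MeasureTheory Real

lemma norm_inv_one_sub_le {𝕜 : Type*} [NormedDivisionRing 𝕜] {r : ℝ} (hr : r < 1) {z : 𝕜}
    (hz : ‖z‖ ≤ r) : ‖(1 - z)⁻¹‖ ≤ (1 - r)⁻¹ := by
  have h : 1 - r ≤ ‖1 - z‖ := by
    simpa using (sub_le_sub_left hz ‖(1 : 𝕜)‖).trans (norm_sub_norm_le (1 : 𝕜) z)
  rw [norm_inv]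
  exact inv_anti₀ (by linarith) h

namespace MeasureTheory

variable {α 𝕜 : Type*} [MeasurableSpace α] {μ : Measure α} [RCLike 𝕜] {f q : α → 𝕜} {r : ℝ}

lemma Integrable.div_one_sub (hf : Integrable f μ) (hq : AEStronglyMeasurable q μ) (hr : r < 1)
    (hqr : ∀ᵐ y ∂μ, ‖q y‖ ≤ r) : Integrable (fun y => f y / (1 - q y)) μ := by
  simp_rw [div_eq_mul_inv]
  refine hf.mul_bdd (c := (1 - r)⁻¹)
    (aemeasurable_const.sub hq.aemeasurable).inv.aestronglyMeasurable ?_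
  filter_upwards [hqr] with y hy using norm_inv_one_sub_le hr hy

lemma hasSum_integral_mul_pow (hf : Integrable f μ) (hq : AEStronglyMeasurable q μ) (hr0 : 0 ≤ r)
    (hr : r < 1) (hqr : ∀ᵐ y ∂μ, ‖q y‖ ≤ r) :
    HasSum (fun k : ℕ => ∫ y, f y * q y ^ k ∂μ) (∫ y, f y / (1 - q y) ∂μ) := by
  have hpow : ∀ k : ℕ, ∀ᵐ y ∂μ, ‖q y ^ k‖ ≤ r ^ k := fun k => by
    filter_upwards [hqr] with y hy
    rw [norm_pow]
    exact pow_le_pow_left₀ (norm_nonneg _) hy k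
  have hint : ∀ k : ℕ, Integrable (fun y => f y * q y ^ k) μ := fun k =>
    hf.mul_bdd (hq.pow k) (hpow k)
  have hsum : Summable fun k : ℕ => ∫ y, ‖f y * q y ^ k‖ ∂μ := by
    refine Summable.of_nonneg_of_le (fun k => integral_nonneg fun y => norm_nonneg _)
      (fun k => ?_) ((summable_geometric_of_lt_one hr0 hr).mul_left (∫ y, ‖f y‖ ∂μ))
    rw [← integral_mul_const]
    refine integral_mono_ae (hint k).norm (hf.norm.mul_const _) ?_
    filter_upwards [hpow k] with y hy
    rw [norm_mul]
    exact mul_le_mul_of_nonneg_left hy (norm_nonneg _)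
  have hgeom : ∫ y, f y / (1 - q y) ∂μ = ∫ y, ∑' k : ℕ, f y * q y ^ k ∂μ := by
    refine integral_congr_ae ?_
    filter_upwards [hqr] with y hy
    rw [tsum_mul_left, tsum_geometric_of_norm_lt_one (hy.trans_lt hr), div_eq_mul_inv]
  rw [hgeom]
  exact hasSum_integral_of_summable_integral_norm hint hsum

end MeasureTheory

lemma summable_norm_div_of_le_norm {ι 𝕜 : Type*} [NormedDivisionRing 𝕜] {f d : ι → 𝕜} {δ : ℝ}
    (hf : Summable fun i => ‖f i‖) (hδ : 0 < δ) (hd : ∀ i, δ ≤ ‖d i‖) :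
    Summable fun i => ‖f i / d i‖ :=
  (hf.div_const δ).of_nonneg_of_le (fun _ => norm_nonneg _) fun i => by
    rw [norm_div]
    exact div_le_div_of_nonneg_left (norm_nonneg _) hδ (hd i)

namespace Complex

lemma re_le_norm_add_natCast (z : ℂ) (k : ℕ) : z.re ≤ ‖z + k‖ :=
  calc z.re ≤ (z + k).re := by simp
    _ ≤ ‖z + k‖ := re_le_norm _

lemma norm_mul_re_le_norm_add_natCast_mul (a w : ℂ) (k : ℕ) : ‖w‖ * a.re ≤ ‖a * w + k * w‖ := by
  rw [← add_mul, norm_mul, mul_comm ‖w‖]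
  exact mul_le_mul_of_nonneg_right (re_le_norm_add_natCast a k) (norm_nonneg w)

lemma norm_mul_one_sub_re_le_norm_sub_natCast_add_one_mul (a w : ℂ) (k : ℕ) :
    ‖w‖ * (1 - a.re) ≤ ‖a * w - (k + 1) * w‖ := by
  have h : a * w - (k + 1) * w = -((1 - a) * w + k * w) := by ring
  rw [h, norm_neg]
  simpa using norm_mul_re_le_norm_add_natCast_mul (1 - a) w k

lemma ae_restrict_Ioc_norm_ofReal_le (x : ℝ) :
    ∀ᵐ y : ℝ ∂(volume.restrict (Set.Ioc 0 x)), ‖(y : ℂ)‖ ≤ x :=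
  ae_restrict_of_forall_mem measurableSet_Ioc fun y hy => by
    rw [norm_real, norm_of_nonneg hy.1.le]
    exact hy.2

lemma ae_restrict_Ioi_norm_inv_ofReal_le {c : ℝ} (hc : 0 < c) :
    ∀ᵐ y : ℝ ∂(volume.restrict (Set.Ioi c)), ‖(y : ℂ)⁻¹‖ ≤ c⁻¹ :=
  ae_restrict_of_forall_mem measurableSet_Ioi fun y hy => by
    rw [norm_inv, norm_real, norm_of_nonneg (hc.trans hy).le]
    exact inv_anti₀ hc (le_of_lt hy)

lemma integrableOn_Ioc_cpow_sub_one {b : ℂ} (hb : 0 < b.re) (x : ℝ) :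
    IntegrableOn (fun y : ℝ => (y : ℂ) ^ (b - 1)) (Set.Ioc 0 x) :=
  (intervalIntegral.intervalIntegrable_cpow' (by simpa using hb)).1

lemma integrableOn_Ioi_cpow_sub_two {a : ℂ} (ha : a.re < 1) {c : ℝ} (hc : 0 < c) :
    IntegrableOn (fun y : ℝ => -(y : ℂ) ^ (a - 2)) (Set.Ioi c) :=
  (integrableOn_Ioi_cpow_of_lt (by simp; linarith) hc).neg

lemma cpow_sub_one_div_one_sub (a : ℂ) {y : ℝ} (hy : 0 < y) :
    (y : ℂ) ^ (a - 1) / (1 - y) = -(y : ℂ) ^ (a - 2) / (1 - (y : ℂ)⁻¹) := by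
  have hy' : (y : ℂ) ≠ 0 := ofReal_ne_zero.2 hy.ne'
  rw [show a - 1 = a - 2 + 1 by ring, cpow_add _ _ hy', cpow_one]
  rcases eq_or_ne (y : ℂ) 1 with h | h
  · simp [h] -- both sides are the junk value `_ / 0 = 0`
  · have h' : 1 - (y : ℂ) ≠ 0 := sub_ne_zero.2 h.symm
    field_simp
    ring

lemma integrableOn_Ioc_cpow_div_one_sub {b : ℂ} (hb : 0 < b.re) {x : ℝ} (hx : x < 1) :
    IntegrableOn (fun y : ℝ => (y : ℂ) ^ (b - 1) / (1 - y)) (Set.Ioc 0 x) :=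
  Integrable.div_one_sub (integrableOn_Ioc_cpow_sub_one hb x)
    continuous_ofReal.aestronglyMeasurable hx (ae_restrict_Ioc_norm_ofReal_le x)

lemma integrableOn_Ioi_cpow_div_one_sub {a : ℂ} (ha : a.re < 1) {c : ℝ} (hc : 1 < c) :
    IntegrableOn (fun y : ℝ => (y : ℂ) ^ (a - 1) / (1 - y)) (Set.Ioi c) := by
  have hc0 : 0 < c := one_pos.trans hc
  have h : IntegrableOn (fun y : ℝ => -(y : ℂ) ^ (a - 2) / (1 - (y : ℂ)⁻¹)) (Set.Ioi c) :=
    Integrable.div_one_sub (integrableOn_Ioi_cpow_sub_two ha hc0)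
      measurable_ofReal.inv.aestronglyMeasurable (inv_lt_one_of_one_lt₀ hc)
      (ae_restrict_Ioi_norm_inv_ofReal_le hc0)
  exact h.congr_fun (fun y hy => (cpow_sub_one_div_one_sub a (hc0.trans hy)).symm)
    measurableSet_Ioi

theorem hasSum_integral_Ioc_cpow_div_one_sub {b : ℂ} (hb : 0 < b.re) {x : ℝ} (hx0 : 0 ≤ x)
    (hx1 : x < 1) :
    HasSum (fun k : ℕ => (x : ℂ) ^ (b + k) / (b + k))
      (∫ y in Set.Ioc 0 x, (y : ℂ) ^ (b - 1) / (1 - y)) := by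
  refine (hasSum_integral_mul_pow (integrableOn_Ioc_cpow_sub_one hb x)
    continuous_ofReal.aestronglyMeasurable hx0 hx1 (ae_restrict_Ioc_norm_ofReal_le x)).congr_fun
    fun k => ?_
  have hk : -1 < (b - 1 + k).re := by simp; linarith [(k.cast_nonneg : (0 : ℝ) ≤ k)]
  calc (x : ℂ) ^ (b + k) / (b + k) = ∫ y in (0 : ℝ)..x, (y : ℂ) ^ (b - 1 + k) := by
        rw [integral_cpow (Or.inl hk), show b - 1 + k + 1 = b + k by ring, ofReal_zero,
          zero_cpow (by simpa using (hb.trans_le (re_le_norm_add_natCast b k)).ne'), sub_zero]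
    _ = ∫ y in Set.Ioc 0 x, (y : ℂ) ^ (b - 1) * (y : ℂ) ^ k := by
        rw [intervalIntegral.integral_of_le hx0]
        refine setIntegral_congr_fun measurableSet_Ioc fun y hy => ?_
        rw [cpow_add _ _ (ofReal_ne_zero.2 hy.1.ne'), cpow_natCast]

theorem hasSum_integral_Ioi_cpow_div_one_sub {a : ℂ} (ha : a.re < 1) {c : ℝ} (hc : 1 < c) :
    HasSum (fun k : ℕ => (c : ℂ) ^ (a - 1 - k) / (a - 1 - k))
      (∫ y in Set.Ioi c, (y : ℂ) ^ (a - 1) / (1 - y)) := by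
  have hc0 : 0 < c := one_pos.trans hc
  rw [setIntegral_congr_fun measurableSet_Ioi fun y hy =>
    cpow_sub_one_div_one_sub a (hc0.trans hy)]
  refine (hasSum_integral_mul_pow (integrableOn_Ioi_cpow_sub_two ha hc0)
    measurable_ofReal.inv.aestronglyMeasurable (inv_nonneg.2 hc0.le) (inv_lt_one_of_one_lt₀ hc)
    (ae_restrict_Ioi_norm_inv_ofReal_le hc0)).congr_fun fun k => ?_
  have hk : (a - 2 - k).re < -1 := by simp; linarith [(k.cast_nonneg : (0 : ℝ) ≤ k)]
  calc (c : ℂ) ^ (a - 1 - k) / (a - 1 - k) = -∫ y in Set.Ioi c, (y : ℂ) ^ (a - 2 - k) := by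
        rw [integral_Ioi_cpow_of_lt hk hc0, show a - 2 - k + 1 = a - 1 - k by ring, neg_div,
          neg_neg]
    _ = ∫ y in Set.Ioi c, -(y : ℂ) ^ (a - 2) * (y : ℂ)⁻¹ ^ k := by
        rw [← integral_neg]
        refine setIntegral_congr_fun measurableSet_Ioi fun y hy => ?_
        rw [inv_pow, ← cpow_natCast, ← cpow_neg, neg_mul, ← cpow_add _ _
          (ofReal_ne_zero.2 (hc0.trans hy).ne'), sub_eq_add_neg]

lemma pow_div_add_natCast_mul_eq {x : ℝ} (hx : 0 < x) (a w : ℂ) (k : ℕ) :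
    (x : ℂ) ^ k / (a * w + k * w) = (x : ℂ) ^ (-a) / w * ((x : ℂ) ^ (a + k) / (a + k)) := by
  have h : (x : ℂ) ^ (-a) * (x : ℂ) ^ (a + k) = (x : ℂ) ^ k := by
    rw [← cpow_add _ _ (ofReal_ne_zero.2 hx.ne'), neg_add_cancel_left, cpow_natCast]
  rw [← h, ← add_mul, div_mul_eq_div_div]
  ring

lemma pow_div_sub_natCast_add_one_mul_eq {x x' : ℝ} (hx : 0 < x) (hx' : 0 < x') (a w : ℂ)
    (k : ℕ) :
    (x' : ℂ) ^ (k + 1) / (a * w - (k + 1) * w) = (x : ℂ) ^ (-a) / w *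
      (((x * x' : ℝ) : ℂ) ^ a * (((1 / x' : ℝ) : ℂ) ^ (a - 1 - k) / (a - 1 - k))) := by
  have hx0 : (x : ℂ) ≠ 0 := ofReal_ne_zero.2 hx.ne'
  have hx'0 : (x' : ℂ) ≠ 0 := ofReal_ne_zero.2 hx'.ne'
  have hinv : ((1 / x' : ℝ) : ℂ) ^ (a - 1 - k) = ((x' : ℂ) ^ (a - 1 - k))⁻¹ := by
    rw [ofReal_div, ofReal_one, one_div, inv_cpow _ _ (by simp [arg_ofReal_of_nonneg hx'.le,
      pi_ne_zero.symm])]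
  have hpow : (x' : ℂ) ^ (k + 1) = (x' : ℂ) ^ a * ((x' : ℂ) ^ (a - 1 - k))⁻¹ := by
    rw [← cpow_neg, ← cpow_add _ _ hx'0,
      show a + -(a - 1 - k) = ((k + 1 : ℕ) : ℂ) by push_cast; ring, cpow_natCast]
  have hxa : (x : ℂ) ^ (-a) * (x : ℂ) ^ a = 1 := by
    rw [← cpow_add _ _ hx0, neg_add_cancel, cpow_zero]
  rw [ofReal_mul, mul_cpow_ofReal_nonneg hx.le hx'.le, hinv, hpow,
    show a * w - (k + 1) * w = (a - 1 - k) * w by ring, div_mul_eq_div_div]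
  linear_combination -((x' : ℂ) ^ a * ((x' : ℂ) ^ (a - 1 - k))⁻¹ / (a - 1 - k) / w) * hxa

end Complex

theorem stmt17_general (v w : ℂ) (h0 : 0 < (v / w).re) (h1 : (v / w).re < 1)
    (x x' : ℝ) (hx0 : 0 < x) (hx1 : x < 1) (hx'0 : 0 < x') (hx'1 : x' < 1) :
    Summable (fun k : ℕ => ‖(x : ℂ) ^ k / (v + (k : ℂ) * w)‖) ∧
    Summable (fun k : ℕ => ‖(x' : ℂ) ^ (k + 1) / (v - ((k : ℂ) + 1) * w)‖) ∧
    IntervalIntegrable (fun y : ℝ => (y : ℂ) ^ (v / w - 1) / (1 - (y : ℂ))) volume 0 x ∧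
    IntegrableOn (fun y : ℝ => (y : ℂ) ^ (v / w - 1) / (1 - (y : ℂ)))
      (Set.Ioi (1 / x')) ∧
    (∑' k : ℕ, (x : ℂ) ^ k / (v + (k : ℂ) * w)) +
        (∑' k : ℕ, (x' : ℂ) ^ (k + 1) / (v - ((k : ℂ) + 1) * w)) =
      ((x : ℂ) ^ (-(v / w)) / w) *
        ((∫ y in (0 : ℝ)..x, (y : ℂ) ^ (v / w - 1) / (1 - (y : ℂ))) +
          ((x * x' : ℝ) : ℂ) ^ (v / w) *
            ∫ y in Set.Ioi (1 / x' : ℝ), (y : ℂ) ^ (v / w - 1) / (1 - (y : ℂ))) := by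
  have hw : w ≠ 0 := by
    rintro rfl
    simp at h0
  obtain ⟨a, rfl⟩ : ∃ a, v = a * w := ⟨v / w, (div_mul_cancel₀ v hw).symm⟩
  rw [mul_div_cancel_right₀ a hw] at h0 h1 ⊢
  have hwa : 0 < ‖w‖ := norm_pos_iff.2 hw
  have hx : ‖(x : ℂ)‖ < 1 := by rwa [Complex.norm_real, norm_of_nonneg hx0.le]
  have hx' : ‖(x' : ℂ)‖ < 1 := by rwa [Complex.norm_real, norm_of_nonneg hx'0.le]
  have hc : 1 < 1 / x' := one_lt_one_div hx'0 hx'1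
  have hS1 := ((Complex.hasSum_integral_Ioc_cpow_div_one_sub h0 hx0.le hx1).mul_left
    ((x : ℂ) ^ (-a) / w)).congr_fun (Complex.pow_div_add_natCast_mul_eq hx0 a w)
  have hS2 := (((Complex.hasSum_integral_Ioi_cpow_div_one_sub h1 hc).mul_left
    (((x * x' : ℝ) : ℂ) ^ a)).mul_left ((x : ℂ) ^ (-a) / w)).congr_fun
    (Complex.pow_div_sub_natCast_add_one_mul_eq hx0 hx'0 a w)
  refine ⟨summable_norm_div_of_le_norm (summable_norm_geometric_of_norm_lt_one hx)
      (mul_pos hwa h0) (Complex.norm_mul_re_le_norm_add_natCast_mul a w),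
    summable_norm_div_of_le_norm ((summable_nat_add_iff 1).2
        (summable_norm_geometric_of_norm_lt_one hx')) (mul_pos hwa (sub_pos.2 h1))
      (Complex.norm_mul_one_sub_re_le_norm_sub_natCast_add_one_mul a w),
    (intervalIntegrable_iff_integrableOn_Ioc_of_le hx0.le).2
      (Complex.integrableOn_Ioc_cpow_div_one_sub h0 hx1),
    Complex.integrableOn_Ioi_cpow_div_one_sub h1 hc, ?_⟩
  rw [intervalIntegral.integral_of_le hx0.le, hS1.tsum_eq, hS2.tsum_eq, mul_add]

theorem stmt17 (v w : ℂ) (hw : w ≠ 0) (h0 : 0 < (v / w).re) (h1 : (v / w).re < 1)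
    (x x' : ℝ) (hx0 : 0 < x) (hx1 : x < 1) (hx'0 : 0 < x') (hx'1 : x' < 1) :
    Summable (fun k : ℕ => ‖(x : ℂ) ^ k / (v + (k : ℂ) * w)‖) ∧
    Summable (fun k : ℕ => ‖(x' : ℂ) ^ (k + 1) / (v - ((k : ℂ) + 1) * w)‖) ∧
    IntervalIntegrable (fun y : ℝ => (y : ℂ) ^ (v / w - 1) / (1 - (y : ℂ))) volume 0 x ∧
    IntegrableOn (fun y : ℝ => (y : ℂ) ^ (v / w - 1) / (1 - (y : ℂ)))
      (Set.Ioi (1 / x')) ∧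
    (∑' k : ℕ, (x : ℂ) ^ k / (v + (k : ℂ) * w)) +
        (∑' k : ℕ, (x' : ℂ) ^ (k + 1) / (v - ((k : ℂ) + 1) * w)) =
      ((x : ℂ) ^ (-(v / w)) / w) *
        ((∫ y in (0 : ℝ)..x, (y : ℂ) ^ (v / w - 1) / (1 - (y : ℂ))) +
          ((x * x' : ℝ) : ℂ) ^ (v / w) *
            ∫ y in Set.Ioi (1 / x' : ℝ), (y : ℂ) ^ (v / w - 1) / (1 - (y : ℂ))) :=
  stmt17_general v w h0 h1 x x' hx0 hx1 hx'0 hx'1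
end
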